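/- Let F₃ be the free group on generators a, b, c, and define endomorphisms of F₃ by: e_α : a ↦ a, b ↦ a⁻¹b, c ↦ a⁻¹c; d_γ : a ↦ ac⁻¹, b ↦ b, c ↦ c; d_α : a ↦ a, b ↦ ab, c ↦ ac. Then the composite endomorphism φ = d_α² ∘ d_γ ∘ e_α⁴, given by φ(x) = d_α²(d_γ(e_α⁴(x))), satisfies φ(b) = (a²ca⁻¹)⁴ a² b. -/
import Mathlib


namespace Stmt17

/-- Generators `a = ᾱ`, `b = β̄`, `c = γ̄` of the free group `F₃`. -/
def a : FreeGroup (Fin 3) := FreeGroup.of 0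
def b : FreeGroup (Fin 3) := FreeGroup.of 1
def c : FreeGroup (Fin 3) := FreeGroup.of 2

/-- The endomorphism `e_α = d_α⁻¹ : a ↦ a, b ↦ a⁻¹b, c ↦ a⁻¹c`. -/
def eAlpha : Monoid.End (FreeGroup (Fin 3)) := FreeGroup.lift ![a, a⁻¹ * b, a⁻¹ * c]

/-- The endomorphism `d_γ : a ↦ ac⁻¹, b ↦ b, c ↦ c`. -/
def dGamma : Monoid.End (FreeGroup (Fin 3)) := FreeGroup.lift ![a * c⁻¹, b, c]

/-- The endomorphism `d_α : a ↦ a, b ↦ ab, c ↦ ac`. -/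
def dAlpha : Monoid.End (FreeGroup (Fin 3)) := FreeGroup.lift ![a, a * b, a * c]


lemma eAlpha_of (i : Fin 3) : eAlpha (FreeGroup.of i) = ![a, a⁻¹ * b, a⁻¹ * c] i :=
  FreeGroup.lift_apply_of

lemma dGamma_of (i : Fin 3) : dGamma (FreeGroup.of i) = ![a * c⁻¹, b, c] i :=
  FreeGroup.lift_apply_of

lemma dAlpha_of (i : Fin 3) : dAlpha (FreeGroup.of i) = ![a, a * b, a * c] i :=
  FreeGroup.lift_apply_of

/-- For `φ = d_α² ∘ d_γ ∘ e_α⁴` (applying `e_α⁴` first),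
`φ(b) = (a²ca⁻¹)⁴ a² b`. -/
theorem stmt17 :
    (dAlpha ^ 2 * dGamma * eAlpha ^ 4) b =
      (a ^ 2 * c * a⁻¹) ^ 4 * a ^ 2 * b := by
  show dAlpha (dAlpha (dGamma (eAlpha (eAlpha (eAlpha (eAlpha b)))))) = _
  simp only [a, b, c, eAlpha_of, dGamma_of, dAlpha_of, map_mul, map_inv,
    Matrix.cons_val_zero, Matrix.cons_val_one, Matrix.head_cons,
    Matrix.cons_val_two, Matrix.tail_cons, pow_succ, pow_zero, one_mul, mul_assoc]
  group
  rw [zpow_two]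

end Stmt17
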